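/- arXiv:1708.06671 — 2 statements merged into one kernel-verified Lean document; each statement's English description precedes it below -/
import Mathlib

section
/- Let τ ∈ ℝ, let Ω ⊆ ℝ² be open, and let u : Ω → ℝ be a C² function; set α = u_x + τy, β = u_y − τx and ω = (1 + α² + β²)^(1/2). Then at every point of Ω the cross-partial identity ∂_y((−u_y + τx)/ω) = ∂_x((u_x + τy)/ω) holds if and only if the minimal surface equation (1+β²)u_xx − 2αβ u_xy + (1+α²)u_yy = 0 holds at that point. (Hence on a simply connected domain, the minimal surface equation for u is exactly the integrability condition for the existence of a dual function v with v_x = (−u_y + τx)/ω and v_y = (u_x + τy)/ω.) -/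
/-! Since `(−u_y + τx)/ω = −β/ω`, the cross-partial identity says that the divergence of the
field `(α, β)/ω` vanishes. By the quotient and chain rules that divergence equals
`((1 + β²) α_x − αβ (β_x + α_y) + (1 + α²) β_y) / ω³`, and for `u` of class `C²` we have
`α_x = u_xx`, `β_y = u_yy` and `β_x + α_y = u_yx + u_xy = 2 u_xy`: the `τ` terms cancel, and
Schwarz's theorem applies. So the numerator is the minimal surface operator. -/

/-- Partial derivative in the `x` direction. -/
noncomputable def px (f : ℝ × ℝ → ℝ) (p : ℝ × ℝ) : ℝ := fderiv ℝ f p (1, 0)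

/-- Partial derivative in the `y` direction. -/
noncomputable def py (f : ℝ × ℝ → ℝ) (p : ℝ × ℝ) : ℝ := fderiv ℝ f p (0, 1)

/-- `α = u_x + τ y`. -/
noncomputable def alph (τ : ℝ) (u : ℝ × ℝ → ℝ) (p : ℝ × ℝ) : ℝ := px u p + τ * p.2

/-- `β = u_y − τ x`. -/
noncomputable def bet (τ : ℝ) (u : ℝ × ℝ → ℝ) (p : ℝ × ℝ) : ℝ := py u p - τ * p.1

/-- Riemannian area element `ω = (1 + α² + β²)^(1/2)` of the graph of `u`. -/
noncomputable def omeg (τ : ℝ) (u : ℝ × ℝ → ℝ) (p : ℝ × ℝ) : ℝ :=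
  Real.sqrt (1 + (alph τ u p) ^ 2 + (bet τ u p) ^ 2)

section
variable {E : Type*} [NormedAddCommGroup E] [NormedSpace ℝ E] {p : E}

theorem fderiv_div_sqrt_one_add_sq_add_sq_apply {a b : E → ℝ} (ha : DifferentiableAt ℝ a p)
    (hb : DifferentiableAt ℝ b p) (v : E) :
    fderiv ℝ (fun q => a q / √(1 + a q ^ 2 + b q ^ 2)) p v =
      ((1 + b p ^ 2) * fderiv ℝ a p v - a p * b p * fderiv ℝ b p v) /
        √(1 + a p ^ 2 + b p ^ 2) ^ 3 := by
  have hS_pos : 0 < 1 + a p ^ 2 + b p ^ 2 := by positivity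
  have hω_pos := Real.sqrt_pos.2 hS_pos
  have hω := (((ha.hasFDerivAt.pow 2).const_add 1).add (hb.hasFDerivAt.pow 2)).sqrt hS_pos.ne'
  have hquot : HasFDerivAt (fun q => a q / √(1 + a q ^ 2 + b q ^ 2)) _ p :=
    ha.hasFDerivAt.mul ((hasDerivAt_inv hω_pos.ne').comp_hasFDerivAt p hω)
  rw [hquot.fderiv]
  simp only [Pi.add_apply, one_div, mul_inv_rev, Nat.add_one_sub_one, pow_one, nsmul_eq_mul,
    Nat.cast_ofNat, smul_add, neg_smul, smul_neg, add_apply, neg_apply, smul_apply, smul_eq_mul]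
  field_simp
  linear_combination fderiv ℝ a p v * Real.sq_sqrt hS_pos.le

variable {F : Type*} [NormedAddCommGroup F] [NormedSpace ℝ F] {u : E → F}

theorem ContDiffAt.differentiableAt_fderiv_apply (hu : ContDiffAt ℝ 2 u p) (v : E) :
    DifferentiableAt ℝ (fun q => fderiv ℝ u q v) p :=
  ((hu.fderiv_right one_add_one_eq_two.le).differentiableAt one_ne_zero).clm_apply
    (differentiableAt_const v)

theorem ContDiffAt.fderiv_fderiv_apply_comm (hu : ContDiffAt ℝ 2 u p) (v w : E) :
    fderiv ℝ (fun q => fderiv ℝ u q v) p w = fderiv ℝ (fun q => fderiv ℝ u q w) p v := by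
  have hD := (hu.fderiv_right one_add_one_eq_two.le).differentiableAt one_ne_zero
  rw [fderiv_clm_apply hD (differentiableAt_const v),
    fderiv_clm_apply hD (differentiableAt_const w)]
  simpa using hu.isSymmSndFDerivAt (by simp) w v

end

section
variable {p : ℝ × ℝ}

theorem px_div_sqrt_add_py_div_sqrt {a b : ℝ × ℝ → ℝ} (ha : DifferentiableAt ℝ a p)
    (hb : DifferentiableAt ℝ b p) :
    px (fun q => a q / √(1 + a q ^ 2 + b q ^ 2)) p
      + py (fun q => b q / √(1 + a q ^ 2 + b q ^ 2)) p =
      ((1 + b p ^ 2) * px a p - a p * b p * (px b p + py a p) + (1 + a p ^ 2) * py b p) /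
        √(1 + a p ^ 2 + b p ^ 2) ^ 3 := by
  have hb' := fderiv_div_sqrt_one_add_sq_add_sq_apply hb ha (0, 1)
  have hS (q) : 1 + b q ^ 2 + a q ^ 2 = 1 + a q ^ 2 + b q ^ 2 := add_right_comm _ _ _
  simp only [hS] at hb'
  simp only [px, py]
  rw [fderiv_div_sqrt_one_add_sq_add_sq_apply ha hb, hb']
  ring

theorem py_neg (f : ℝ × ℝ → ℝ) : py (fun q => -f q) p = -py f p := by
  simp only [py, fderiv_fun_neg, neg_apply]

variable {u : ℝ × ℝ → ℝ} (τ : ℝ)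

theorem px_alph (hu : DifferentiableAt ℝ (px u) p) : px (alph τ u) p = px (px u) p := by
  have h : HasFDerivAt (alph τ u) _ p := hu.hasFDerivAt.add (hasFDerivAt_snd.const_mul τ)
  simp [px, h.fderiv]

theorem py_alph (hu : DifferentiableAt ℝ (px u) p) : py (alph τ u) p = py (px u) p + τ := by
  have h : HasFDerivAt (alph τ u) _ p := hu.hasFDerivAt.add (hasFDerivAt_snd.const_mul τ)
  simp [py, h.fderiv]

theorem px_bet (hu : DifferentiableAt ℝ (py u) p) : px (bet τ u) p = px (py u) p - τ := by
  have h : HasFDerivAt (bet τ u) _ p := hu.hasFDerivAt.sub (hasFDerivAt_fst.const_mul τ)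
  simp [px, h.fderiv]

theorem py_bet (hu : DifferentiableAt ℝ (py u) p) : py (bet τ u) p = py (py u) p := by
  have h : HasFDerivAt (bet τ u) _ p := hu.hasFDerivAt.sub (hasFDerivAt_fst.const_mul τ)
  simp [py, h.fderiv]

end

/-- for a `C²` function `u`, the cross-partial identity
`∂_y((−u_y + τx)/ω) = ∂_x((u_x + τy)/ω)` holds at a point of `Ω` iff the minimal
surface equation in `Nil₃(τ)` holds there; i.e. the minimal surface equation is
the integrability condition for the twin relations. -/
theorem minimal_eq_is_integrability_condition (τ : ℝ) (Ω : Set (ℝ × ℝ)) (hΩ : IsOpen Ω)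
    (u : ℝ × ℝ → ℝ) (hu : ContDiffOn ℝ 2 u Ω) :
    ∀ p ∈ Ω,
      (py (fun q => (-py u q + τ * q.1) / omeg τ u q) p
          = px (fun q => (px u q + τ * q.2) / omeg τ u q) p) ↔
      ((1 + (bet τ u p) ^ 2) * px (px u) p
          - 2 * alph τ u p * bet τ u p * py (px u) p
          + (1 + (alph τ u p) ^ 2) * py (py u) p = 0) := by
  intro p hp
  have hu₂ : ContDiffAt ℝ 2 u p := hu.contDiffAt (hΩ.mem_nhds hp)
  have hux : DifferentiableAt ℝ (px u) p := hu₂.differentiableAt_fderiv_apply (1, 0)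
  have huy : DifferentiableAt ℝ (py u) p := hu₂.differentiableAt_fderiv_apply (0, 1)
  have hsymm : px (py u) p = py (px u) p := hu₂.fderiv_fderiv_apply_comm (0, 1) (1, 0)
  have hdiv : px (fun q => (px u q + τ * q.2) / omeg τ u q) p
      + py (fun q => bet τ u q / omeg τ u q) p
      = ((1 + bet τ u p ^ 2) * px (px u) p - 2 * alph τ u p * bet τ u p * py (px u) p
          + (1 + alph τ u p ^ 2) * py (py u) p) / omeg τ u p ^ 3 := by
    have hα : DifferentiableAt ℝ (alph τ u) p := hux.add (by fun_prop)
    have hβ : DifferentiableAt ℝ (bet τ u) p := huy.sub (by fun_prop)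
    refine (px_div_sqrt_add_py_div_sqrt hα hβ).trans ?_
    rw [px_alph τ hux, py_alph τ hux, px_bet τ huy, py_bet τ huy, hsymm, omeg]
    ring
  have hω : omeg τ u p ≠ 0 := (Real.sqrt_pos.2 (by positivity)).ne'
  have hβ_fun : (fun q => (-py u q + τ * q.1) / omeg τ u q)
      = fun q => -(bet τ u q / omeg τ u q) := by
    funext q
    rw [bet]
    ring
  rw [hβ_fun, py_neg, neg_eq_iff_add_eq_zero, add_comm, hdiv, div_eq_zero_iff,
    or_iff_left (pow_ne_zero 3 hω)]
end

section
/- Let τ ∈ ℝ, let Ω ⊆ ℝ² be open, and let v : Ω → ℝ be a C² function with v_x² + v_y² < 1 satisfying the spacelike constant-mean-curvature-τ equation (1−v_y²)v_xx + 2 v_x v_y v_xy + (1−v_x²)v_yy = 2τ ω̃³, where ω̃ = (1 − v_x² − v_y²)^(1/2). Then the complex number Q̃₁₁ = (2/ω̃²)(v_x v_y v_xx + (1−v_x²) v_xy) + (2i/ω̃) v_xx − 2iτ(1−v_x²) satisfies |Q̃₁₁|² = 4(1−v_x²)² ((v_xy² − v_xx v_yy)/ω̃⁴ + τ²) on Ω.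 -/
/-- Lorentzian area element `ω̃ = (1 − v_x² − v_y²)^(1/2)` of the graph of `v`. -/
noncomputable def omegT (v : ℝ × ℝ → ℝ) (p : ℝ × ℝ) : ℝ :=
  Real.sqrt (1 - (px v p) ^ 2 - (py v p) ^ 2)

/-- `(ẽ₁,ẽ₁)`-component of the Hopf differential of the spacelike CMC-`τ`
graph of `v` in `𝕃³`:
`Q̃₁₁ = (2/ω̃²)(v_x v_y v_xx + (1−v_x²) v_xy) + (2i/ω̃) v_xx − 2iτ(1−v_x²)`. -/
noncomputable def QT11 (τ : ℝ) (v : ℝ × ℝ → ℝ) (p : ℝ × ℝ) : ℂ :=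
  ((2 / (omegT v p) ^ 2) *
      (px v p * py v p * px (px v) p + (1 - (px v p) ^ 2) * py (px v) p) : ℝ) +
    Complex.I * ((2 / omegT v p) * px (px v) p - 2 * τ * (1 - (px v p) ^ 2) : ℝ)

theorem Complex.sq_norm_ofReal_add_I_mul (x y : ℝ) : ‖(x : ℂ) + Complex.I * y‖ ^ 2 = x ^ 2 + y ^ 2 := by
  rw [Complex.sq_norm, mul_comm, Complex.normSq_add_mul_I]

theorem omegT_sq {v : ℝ × ℝ → ℝ} {p : ℝ × ℝ} (h : (px v p) ^ 2 + (py v p) ^ 2 ≤ 1) :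
    (omegT v p) ^ 2 = 1 - (px v p) ^ 2 - (py v p) ^ 2 :=
  Real.sq_sqrt (by linarith)

theorem omegT_pos {v : ℝ × ℝ → ℝ} {p : ℝ × ℝ} (h : (px v p) ^ 2 + (py v p) ^ 2 < 1) :
    0 < omegT v p :=
  Real.sqrt_pos.2 (by linarith)

/-- `a, b, A, B, C, w` stand for `v_x, v_y, v_xx, v_xy, v_yy, ω̃`. -/
theorem hopf_sq_identity {τ a b A B C w : ℝ} (hw : w ≠ 0) (hw2 : w ^ 2 = 1 - a ^ 2 - b ^ 2)
    (hcmc : (1 - b ^ 2) * A + 2 * a * b * B + (1 - a ^ 2) * C = 2 * τ * w ^ 3) :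
    ((2 / w ^ 2) * (a * b * A + (1 - a ^ 2) * B)) ^ 2 + ((2 / w) * A - 2 * τ * (1 - a ^ 2)) ^ 2
      = 4 * (1 - a ^ 2) ^ 2 * ((B ^ 2 - A * C) / w ^ 4 + τ ^ 2) := by
  field_simp
  linear_combination (4 * A ^ 2) * hw2 + (4 * (1 - a ^ 2) * A) * hcmc

theorem abs_sq_hopf_general (τ : ℝ) (Ω : Set (ℝ × ℝ))
    (v : ℝ × ℝ → ℝ)
    (hsp : ∀ p ∈ Ω, (px v p) ^ 2 + (py v p) ^ 2 < 1)
    (hcmc : ∀ p ∈ Ω,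
      (1 - (py v p) ^ 2) * px (px v) p
        + 2 * px v p * py v p * py (px v) p
        + (1 - (px v p) ^ 2) * py (py v) p = 2 * τ * (omegT v p) ^ 3) :
    ∀ p ∈ Ω,
      ‖QT11 τ v p‖ ^ 2
        = 4 * (1 - (px v p) ^ 2) ^ 2 *
            (((py (px v) p) ^ 2 - px (px v) p * py (py v) p) / (omegT v p) ^ 4 + τ ^ 2) := by
  intro p hp
  rw [QT11, Complex.sq_norm_ofReal_add_I_mul]
  exact hopf_sq_identity (omegT_pos (hsp p hp)).ne' (omegT_sq (hsp p hp).le) (hcmc p hp)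

/-- for a spacelike CMC-`τ` graph in `𝕃³`, the squared modulus of
the `(ẽ₁,ẽ₁)`-component of the Hopf differential satisfies
`|Q̃₁₁|² = 4(1−v_x²)² ((v_xy² − v_xx v_yy)/ω̃⁴ + τ²)`. -/
theorem abs_sq_hopf (τ : ℝ) (Ω : Set (ℝ × ℝ)) (hΩ : IsOpen Ω)
    (v : ℝ × ℝ → ℝ) (hv : ContDiffOn ℝ 2 v Ω)
    (hsp : ∀ p ∈ Ω, (px v p) ^ 2 + (py v p) ^ 2 < 1)
    (hcmc : ∀ p ∈ Ω,
      (1 - (py v p) ^ 2) * px (px v) p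
        + 2 * px v p * py v p * py (px v) p
        + (1 - (px v p) ^ 2) * py (py v) p = 2 * τ * (omegT v p) ^ 3) :
    ∀ p ∈ Ω,
      ‖QT11 τ v p‖ ^ 2
        = 4 * (1 - (px v p) ^ 2) ^ 2 *
            (((py (px v) p) ^ 2 - px (px v) p * py (py v) p) / (omegT v p) ^ 4 + τ ^ 2) :=
  abs_sq_hopf_general τ Ω v hsp hcmc
end
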